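/- If f and g are 2-regular on a domain Ω ⊆ ℝ⁴, then L₀f + L₁g is 1-regular, i.e. 𝒟⁽¹⁾(L₀f + L₁g) = 0. -/

import Mathlib

/-- Partial derivative in direction `μ` for complex-valued functions on `ℝ⁴`. -/
noncomputable def pdC (μ : Fin 4) (f : (Fin 4 → ℝ) → ℂ) (x : Fin 4 → ℝ) : ℂ :=
  fderiv ℝ f x (Pi.single μ 1)

/-- The raised-index operators `∇ₐ^{A′}`:
`∇₀^{0′} = −∂₂−i∂₃`, `∇₀^{1′} = −∂₀−i∂₁`, `∇₁^{0′} = ∂₀−i∂₁`, `∇₁^{1′} = −∂₂+i∂₃`. -/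
noncomputable def nab (A A' : Fin 2) (f : (Fin 4 → ℝ) → ℂ) (x : Fin 4 → ℝ) : ℂ :=
  if A = 0 then
    (if A' = 0 then -pdC 2 f x - Complex.I * pdC 3 f x
     else -pdC 0 f x - Complex.I * pdC 1 f x)
  else
    (if A' = 0 then pdC 0 f x - Complex.I * pdC 1 f x
     else -pdC 2 f x + Complex.I * pdC 3 f x)

/-- The coordinate functions `zₐ^{A′}`:
`z₀^{0′} = −x₂−ix₃`, `z₀^{1′} = −x₀−ix₁`, `z₁^{0′} = x₀−ix₁`, `z₁^{1′} = −x₂+ix₃`. -/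
noncomputable def zc (A A' : Fin 2) (x : Fin 4 → ℝ) : ℂ :=
  if A = 0 then
    (if A' = 0 then -(x 2 : ℂ) - (x 3 : ℂ) * Complex.I
     else -(x 0 : ℂ) - (x 1 : ℂ) * Complex.I)
  else
    (if A' = 0 then (x 0 : ℂ) - (x 1 : ℂ) * Complex.I
     else -(x 2 : ℂ) + (x 3 : ℂ) * Complex.I)

/-- The 1-Cauchy–Fueter operator: `(𝒟⁽¹⁾h)_A = ∇_A^{0′}h_{0′} + ∇_A^{1′}h_{1′}`. -/
noncomputable def D1CF (g : (Fin 4 → ℝ) → Fin 2 → ℂ) (x : Fin 4 → ℝ) (A : Fin 2) : ℂ :=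
  nab A 0 (fun y => g y 0) x + nab A 1 (fun y => g y 1) x

/-- The 2-Cauchy–Fueter operator: `(𝒟⁽²⁾f)_{AA′} = ∇_A^{0′}f_{0′A′} + ∇_A^{1′}f_{1′A′}`. -/
noncomputable def D2CF (f : (Fin 4 → ℝ) → Fin 2 → Fin 2 → ℂ) (x : Fin 4 → ℝ)
    (A A' : Fin 2) : ℂ :=
  nab A 0 (fun y => f y 0 A') x + nab A 1 (fun y => f y 1 A') x

/-- `Lⱼ` on `⊙²ℂ²`-valued functions: `(Lⱼ f)_{A′} = zⱼ^{0′} f_{0′A′} + zⱼ^{1′} f_{1′A′}`. -/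
noncomputable def Lsym (j : Fin 2) (f : (Fin 4 → ℝ) → Fin 2 → Fin 2 → ℂ)
    (x : Fin 4 → ℝ) (A' : Fin 2) : ℂ :=
  zc j 0 x * f x 0 A' + zc j 1 x * f x 1 A'

/-- derivative of the coordinate functions zc -/
noncomputable def dzc (j B' : Fin 2) (μ : Fin 4) : ℂ :=
  if j = 0 then
    (if B' = 0 then (if μ = 2 then -1 else if μ = 3 then -Complex.I else 0)
     else (if μ = 0 then -1 else if μ = 1 then -Complex.I else 0))
  else
    (if B' = 0 then (if μ = 0 then 1 else if μ = 1 then -Complex.I else 0)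
     else (if μ = 2 then -1 else if μ = 3 then Complex.I else 0))

lemma hasFDerivAt_cc (ν : Fin 4) (x : Fin 4 → ℝ) :
    HasFDerivAt (fun y : Fin 4 → ℝ => ((y ν : ℝ) : ℂ))
      (Complex.ofRealCLM.comp (ContinuousLinearMap.proj ν)) x :=
  (Complex.ofRealCLM.hasFDerivAt).comp x
    ((ContinuousLinearMap.proj (R := ℝ) (φ := fun _ : Fin 4 => ℝ) ν).hasFDerivAt)

lemma pdC_cc (μ ν : Fin 4) (x : Fin 4 → ℝ) :
    pdC μ (fun y => ((y ν : ℝ) : ℂ)) x = if ν = μ then 1 else 0 := by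
  rw [pdC, (hasFDerivAt_cc ν x).fderiv]
  simp [Pi.single_apply]
  split_ifs <;> simp

lemma diff_cc (ν : Fin 4) (x : Fin 4 → ℝ) :
    DifferentiableAt ℝ (fun y : Fin 4 → ℝ => ((y ν : ℝ) : ℂ)) x :=
  (hasFDerivAt_cc ν x).differentiableAt

lemma diff_zc (j B' : Fin 2) (x : Fin 4 → ℝ) :
    DifferentiableAt ℝ (fun y => zc j B' y) x := by
  fin_cases j <;> fin_cases B' <;> simp only [zc] <;> norm_num <;>
    first
    | exact ((diff_cc _ x).neg).sub ((diff_cc _ x).mul_const _)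
    | exact ((diff_cc _ x)).sub ((diff_cc _ x).mul_const _)
    | exact ((diff_cc _ x).neg).add ((diff_cc _ x).mul_const _)

lemma pdC_zc (μ : Fin 4) (j B' : Fin 2) (x : Fin 4 → ℝ) :
    pdC μ (fun y => zc j B' y) x = dzc j B' μ := by
  fin_cases j <;> fin_cases B' <;> simp only [zc] <;> norm_num <;>
  · rw [pdC]
    rw [show (fderiv ℝ _ x : _) = _ from HasFDerivAt.fderiv (by
      first
      | exact ((hasFDerivAt_cc _ x).neg).sub ((hasFDerivAt_cc _ x).mul_const Complex.I)
      | exact ((hasFDerivAt_cc _ x)).sub ((hasFDerivAt_cc _ x).mul_const Complex.I)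
      | exact ((hasFDerivAt_cc _ x).neg).add ((hasFDerivAt_cc _ x).mul_const Complex.I))]
    simp only [ContinuousLinearMap.coe_sub', ContinuousLinearMap.coe_add',
      ContinuousLinearMap.coe_smul', ContinuousLinearMap.neg_apply, Pi.sub_apply, Pi.add_apply,
      Pi.neg_apply, Pi.smul_apply, ContinuousLinearMap.coe_comp', Function.comp_apply,
      ContinuousLinearMap.proj_apply, Complex.ofRealCLM_apply, Pi.single_apply, dzc,
      smul_eq_mul]
    norm_num
    by_cases h0 : μ = 0 <;> by_cases h1 : μ = 1 <;> by_cases h2 : μ = 2 <;>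
      by_cases h3 : μ = 3 <;>
      first
      | (exfalso; have := μ.isLt; simp only [Fin.ext_iff] at h0 h1 h2 h3; omega)
      | (simp_all; try ring)

lemma pdC_add (μ : Fin 4) (p q : (Fin 4 → ℝ) → ℂ) (x : Fin 4 → ℝ)
    (hp : DifferentiableAt ℝ p x) (hq : DifferentiableAt ℝ q x) :
    pdC μ (fun y => p y + q y) x = pdC μ p x + pdC μ q x := by
  simp [pdC, fderiv_fun_add hp hq]

lemma pdC_mul (μ : Fin 4) (p q : (Fin 4 → ℝ) → ℂ) (x : Fin 4 → ℝ)
    (hp : DifferentiableAt ℝ p x) (hq : DifferentiableAt ℝ q x) :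
    pdC μ (fun y => p y * q y) x = pdC μ p x * q x + p x * pdC μ q x := by
  simp only [pdC, fderiv_fun_mul hp hq, ContinuousLinearMap.add_apply,
    ContinuousLinearMap.coe_smul', Pi.smul_apply, smul_eq_mul]
  ring

lemma pdC_Lfg (μ : Fin 4) (f g : (Fin 4 → ℝ) → Fin 2 → Fin 2 → ℂ) (A' : Fin 2)
    (x : Fin 4 → ℝ) (hf : DifferentiableAt ℝ f x) (hg : DifferentiableAt ℝ g x) :
    pdC μ (fun y => Lsym 0 f y A' + Lsym 1 g y A') x =
      dzc 0 0 μ * f x 0 A' + zc 0 0 x * pdC μ (fun y => f y 0 A') x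
      + dzc 0 1 μ * f x 1 A' + zc 0 1 x * pdC μ (fun y => f y 1 A') x
      + dzc 1 0 μ * g x 0 A' + zc 1 0 x * pdC μ (fun y => g y 0 A') x
      + dzc 1 1 μ * g x 1 A' + zc 1 1 x * pdC μ (fun y => g y 1 A') x := by
  have hf0 : DifferentiableAt ℝ (fun y => f y 0 A') x :=
    differentiableAt_pi.1 (differentiableAt_pi.1 hf 0) A'
  have hf1 : DifferentiableAt ℝ (fun y => f y 1 A') x :=
    differentiableAt_pi.1 (differentiableAt_pi.1 hf 1) A'
  have hg0 : DifferentiableAt ℝ (fun y => g y 0 A') x :=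
    differentiableAt_pi.1 (differentiableAt_pi.1 hg 0) A'
  have hg1 : DifferentiableAt ℝ (fun y => g y 1 A') x :=
    differentiableAt_pi.1 (differentiableAt_pi.1 hg 1) A'
  simp only [Lsym]
  rw [pdC_add μ (fun y => zc 0 0 y * f y 0 A' + zc 0 1 y * f y 1 A')
      (fun y => zc 1 0 y * g y 0 A' + zc 1 1 y * g y 1 A') x
      (((diff_zc 0 0 x).mul hf0).add ((diff_zc 0 1 x).mul hf1))
      (((diff_zc 1 0 x).mul hg0).add ((diff_zc 1 1 x).mul hg1)),
    pdC_add μ (fun y => zc 0 0 y * f y 0 A') (fun y => zc 0 1 y * f y 1 A') x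
      ((diff_zc 0 0 x).mul hf0) ((diff_zc 0 1 x).mul hf1),
    pdC_add μ (fun y => zc 1 0 y * g y 0 A') (fun y => zc 1 1 y * g y 1 A') x
      ((diff_zc 1 0 x).mul hg0) ((diff_zc 1 1 x).mul hg1),
    pdC_mul μ (fun y => zc 0 0 y) (fun y => f y 0 A') x (diff_zc 0 0 x) hf0,
    pdC_mul μ (fun y => zc 0 1 y) (fun y => f y 1 A') x (diff_zc 0 1 x) hf1,
    pdC_mul μ (fun y => zc 1 0 y) (fun y => g y 0 A') x (diff_zc 1 0 x) hg0,
    pdC_mul μ (fun y => zc 1 1 y) (fun y => g y 1 A') x (diff_zc 1 1 x) hg1,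
    pdC_zc, pdC_zc, pdC_zc, pdC_zc]
  ring


/-- If `f` and `g` are 2-regular on `Ω`, then `L₀f + L₁g` is 1-regular:
`𝒟⁽¹⁾(L₀f + L₁g) = 0`. -/
theorem L0f_add_L1g_one_regular (Ω : Set (Fin 4 → ℝ)) (hΩ : IsOpen Ω)
    (f g : (Fin 4 → ℝ) → Fin 2 → Fin 2 → ℂ)
    (hf : ContDiffOn ℝ (⊤ : ℕ∞) f Ω) (hg : ContDiffOn ℝ (⊤ : ℕ∞) g Ω)
    (hfsym : ∀ x ∈ Ω, f x 0 1 = f x 1 0) (hgsym : ∀ x ∈ Ω, g x 0 1 = g x 1 0)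
    (hfreg : ∀ x ∈ Ω, ∀ A A' : Fin 2, D2CF f x A A' = 0)
    (hgreg : ∀ x ∈ Ω, ∀ A A' : Fin 2, D2CF g x A A' = 0) :
    ∀ x ∈ Ω, ∀ A : Fin 2,
      D1CF (fun y A' => Lsym 0 f y A' + Lsym 1 g y A') x A = 0 := by
  intro x hx A
  have hfd : DifferentiableAt ℝ f x :=
    (hf.contDiffAt (hΩ.mem_nhds hx)).differentiableAt (by simp)
  have hgd : DifferentiableAt ℝ g x :=
    (hg.contDiffAt (hΩ.mem_nhds hx)).differentiableAt (by simp)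
  have hfds : ∀ μ, pdC μ (fun y => f y 0 1) x = pdC μ (fun y => f y 1 0) x := by
    intro μ
    have hev : (fun y => f y 0 1) =ᶠ[nhds x] (fun y => f y 1 0) := by
      filter_upwards [hΩ.mem_nhds hx] with y hy using hfsym y hy
    simp [pdC, hev.fderiv_eq]
  have hgds : ∀ μ, pdC μ (fun y => g y 0 1) x = pdC μ (fun y => g y 1 0) x := by
    intro μ
    have hev : (fun y => g y 0 1) =ᶠ[nhds x] (fun y => g y 1 0) := by
      filter_upwards [hΩ.mem_nhds hx] with y hy using hgsym y hy
    simp [pdC, hev.fderiv_eq]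
  have e1 := hfreg x hx A 0
  have e2 := hfreg x hx A 1
  have e3 := hgreg x hx A 0
  have e4 := hgreg x hx A 1
  have hfs := hfsym x hx
  have hgs := hgsym x hx
  fin_cases A
  · simp only [D2CF, nab] at e1 e2 e3 e4
    norm_num at e1 e2 e3 e4
    simp only [D1CF, nab]
    norm_num
    rw [pdC_Lfg 2 f g 0 x hfd hgd, pdC_Lfg 3 f g 0 x hfd hgd,
        pdC_Lfg 0 f g 1 x hfd hgd, pdC_Lfg 1 f g 1 x hfd hgd]
    simp only [zc, show dzc 0 0 0 = 0 from rfl, show dzc 0 0 1 = 0 from rfl, show dzc 0 0 2 = -1 from rfl, show dzc 0 0 3 = -Complex.I from rfl, show dzc 0 1 0 = -1 from rfl, show dzc 0 1 1 = -Complex.I from rfl, show dzc 0 1 2 = 0 from rfl, show dzc 0 1 3 = 0 from rfl, show dzc 1 0 0 = 1 from rfl, show dzc 1 0 1 = -Complex.I from rfl, show dzc 1 0 2 = 0 from rfl, show dzc 1 0 3 = 0 from rfl, show dzc 1 1 0 = 0 from rfl, show dzc 1 1 1 = 0 from rfl, show dzc 1 1 2 = -1 from rfl, show dzc 1 1 3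 = Complex.I from rfl]
    norm_num
    rw [hfds 0, hfds 1, hfds 2, hfds 3, hgds 0, hgds 1, hgds 2, hgds 3] at *
    simp only [hfs, hgs]
    linear_combination (-(x 2:ℂ) - (x 3:ℂ)*Complex.I) * e1
      + (-(x 0:ℂ) - (x 1:ℂ)*Complex.I) * e2
      + ((x 0:ℂ) - (x 1:ℂ)*Complex.I) * e3
      + (-(x 2:ℂ) + (x 3:ℂ)*Complex.I) * e4
      + (f x 0 0 + f x 1 1) * Complex.I_sq
  · simp only [D2CF, nab] at e1 e2 e3 e4
    norm_num at e1 e2 e3 e4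
    simp only [D1CF, nab]
    norm_num
    rw [pdC_Lfg 0 f g 0 x hfd hgd, pdC_Lfg 1 f g 0 x hfd hgd,
        pdC_Lfg 2 f g 1 x hfd hgd, pdC_Lfg 3 f g 1 x hfd hgd]
    simp only [zc, show dzc 0 0 0 = 0 from rfl, show dzc 0 0 1 = 0 from rfl, show dzc 0 0 2 = -1 from rfl, show dzc 0 0 3 = -Complex.I from rfl, show dzc 0 1 0 = -1 from rfl, show dzc 0 1 1 = -Complex.I from rfl, show dzc 0 1 2 = 0 from rfl, show dzc 0 1 3 = 0 from rfl, show dzc 1 0 0 = 1 from rfl, show dzc 1 0 1 = -Complex.I from rfl, show dzc 1 0 2 = 0 from rfl, show dzc 1 0 3 = 0 from rfl, show dzc 1 1 0 = 0 from rfl, show dzc 1 1 1 = 0 from rfl, show dzc 1 1 2 = -1 from rfl, show dzc 1 1 3 = Complex.I from rfl]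
    norm_num
    rw [hfds 0, hfds 1, hfds 2, hfds 3, hgds 0, hgds 1, hgds 2, hgds 3] at *
    simp only [hfs, hgs]
    linear_combination (-(x 2:ℂ) - (x 3:ℂ)*Complex.I) * e1
      + (-(x 0:ℂ) - (x 1:ℂ)*Complex.I) * e2
      + ((x 0:ℂ) - (x 1:ℂ)*Complex.I) * e3
      + (-(x 2:ℂ) + (x 3:ℂ)*Complex.I) * e4
      + (g x 0 0 + g x 1 1) * Complex.I_sq
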